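/- Let n ≥ 1, let f : {0,1}^n → ℝ, and let S ⊆ {1,…,n}. Then the Banzhaf interaction index of S equals 2^{|S|} times the Fourier coefficient of f at S: (1/2^{n−|S|}) Σ_{T ⊆ {1,…,n}∖S} Σ_{L ⊆ S} (−1)^{|S|−|L|} f(1_{T∪L}) = 2^{|S|} · 2^{−n} Σ_{x ∈ {0,1}^n} f(x) ∏_{i∈S} (2x_i − 1). -/
import Mathlib


open Finset

/-- The real value of a Boolean bit. -/
noncomputable def bit (b : Bool) : ℝ := if b then 1 else 0

/-- Indicator vector of a subset of `{1,…,n}`, as a point of `{0,1}^n`. -/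
def ind {n : ℕ} (A : Finset (Fin n)) : Fin n → Bool := fun i => decide (i ∈ A)

/-- The multilinear monomial `∏_{i ∈ S} x_i`. -/
noncomputable def monom {n : ℕ} (S : Finset (Fin n)) (x : Fin n → Bool) : ℝ :=
  ∏ i ∈ S, bit (x i)

/-- The multilinear polynomial with coefficient family `a`. -/
noncomputable def poly {n : ℕ} (a : Finset (Fin n) → ℝ) (x : Fin n → Bool) : ℝ :=
  ∑ S : Finset (Fin n), a S * monom S x

/-- The squared loss of the approximation of `f` by the multilinear polynomial
with coefficients `a`, summed over all points of `{0,1}^n`. -/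
noncomputable def loss {n : ℕ} (f : (Fin n → Bool) → ℝ) (a : Finset (Fin n) → ℝ) : ℝ :=
  ∑ x : Fin n → Bool, (f x - poly a x) ^ 2

/-- The signed parity function `χ_S(x) = ∏_{i∈S} (2x_i − 1)`. -/
noncomputable def chi {n : ℕ} (S : Finset (Fin n)) (x : Fin n → Bool) : ℝ :=
  ∏ i ∈ S, (2 * bit (x i) - 1)

/-- The Banzhaf interaction index of the set `S` for the pseudo-Boolean function `f`. -/
noncomputable def BII {n : ℕ} (f : (Fin n → Bool) → ℝ) (S : Finset (Fin n)) : ℝ :=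
  (1 / 2 ^ (n - S.card)) *
    ∑ T ∈ (Finset.univ \ S).powerset, ∑ L ∈ S.powerset,
      (-1 : ℝ) ^ (S.card - L.card) * f (ind (T ∪ L))

lemma ind_bijective {n : ℕ} : Function.Bijective (ind (n := n)) := by
  constructor
  · intro A B h
    ext i
    have := congrFun h i
    simpa [ind] using this
  · intro x
    exact ⟨Finset.univ.filter (fun i => x i), by funext i; simp [ind]⟩

lemma chi_ind_union {n : ℕ} (S T L : Finset (Fin n)) (hT : T ⊆ Finset.univ \ S)
    (hL : L ⊆ S) : chi S (ind (T ∪ L)) = (-1 : ℝ) ^ (S.card - L.card) := by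
  have h1 : chi S (ind (T ∪ L)) = ∏ i ∈ S, (if i ∈ L then (1:ℝ) else -1) := by
    apply Finset.prod_congr rfl
    intro i hi
    have hiT : i ∉ T := fun h => (Finset.mem_sdiff.mp (hT h)).2 hi
    by_cases hiL : i ∈ L <;> simp [ind, bit, hiT, hiL] <;> norm_num
  rw [h1, ← Finset.prod_sdiff hL]
  rw [Finset.prod_congr rfl (fun i hi => if_neg (Finset.mem_sdiff.mp hi).2),
      Finset.prod_congr (rfl : L = L) (fun i hi => if_pos hi)]
  simp [Finset.card_sdiff_of_subset hL]

lemma split_sum {n : ℕ} (S : Finset (Fin n)) (g : Finset (Fin n) → ℝ) :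
    ∑ A : Finset (Fin n), g A =
      ∑ T ∈ (Finset.univ \ S).powerset, ∑ L ∈ S.powerset, g (T ∪ L) := by
  rw [← Finset.sum_product']
  refine Finset.sum_nbij' (fun A => (A \ S, A ∩ S)) (fun p => p.1 ∪ p.2) ?_ ?_ ?_ ?_ ?_
  · intro A _
    simp only [Finset.mem_product, Finset.mem_powerset]
    exact ⟨Finset.sdiff_subset_sdiff (Finset.subset_univ A) (le_refl S),
      Finset.inter_subset_right⟩
  · intro p _; exact Finset.mem_univ _
  · intro A _
    exact Finset.sdiff_union_inter A S
  · intro p hp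
    simp only [Finset.mem_product, Finset.mem_powerset] at hp
    obtain ⟨hT, hL⟩ := hp
    ext i <;> simp only [Finset.mem_sdiff, Finset.mem_union, Finset.mem_inter]
    · constructor
      · rintro ⟨h | h, hiS⟩
        · exact h
        · exact absurd (hL h) hiS
      · intro h
        exact ⟨Or.inl h, fun hs' => (Finset.mem_sdiff.mp (hT h)).2 hs'⟩
    · constructor
      · rintro ⟨h | h, hiS⟩
        · exact absurd hiS (Finset.mem_sdiff.mp (hT h)).2
        · exact h
      · intro h
        exact ⟨Or.inr h, hL h⟩
  · intro A _
    simp [Finset.sdiff_union_inter]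

/-- The Banzhaf interaction index of `S` equals `2^{|S|}` times the Fourier
coefficient of `f` at `S`. -/
theorem banzhaf_interaction_eq_scaled_fourier
    (n : ℕ) (hn : 1 ≤ n) (f : (Fin n → Bool) → ℝ) (S : Finset (Fin n)) :
    BII f S =
      2 ^ S.card * ((∑ x : Fin n → Bool, f x * chi S x) / 2 ^ n) := by
  have hs : S.card ≤ n := by simpa using S.card_le_univ
  have hsum : (∑ x : Fin n → Bool, f x * chi S x) =
      ∑ T ∈ (Finset.univ \ S).powerset, ∑ L ∈ S.powerset,
        (-1 : ℝ) ^ (S.card - L.card) * f (ind (T ∪ L)) := by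
    rw [← Fintype.sum_bijective (ind (n := n)) ind_bijective
      (fun A => f (ind A) * chi S (ind A)) (fun x => f x * chi S x) (fun _ => rfl)]
    rw [split_sum S (fun A => f (ind A) * chi S (ind A))]
    refine Finset.sum_congr rfl fun T hT => Finset.sum_congr rfl fun L hL => ?_
    simp only [Finset.mem_powerset] at hT hL
    rw [chi_ind_union S T L hT hL]
    ring
  rw [hsum, BII]
  have h2 : (2:ℝ) ^ n = 2 ^ (n - S.card) * 2 ^ S.card := by
    rw [← pow_add, Nat.sub_add_cancel hs]
  rw [h2]
  have h0 : (2:ℝ) ^ (n - S.card) ≠ 0 := by positivity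
  have h0' : (2:ℝ) ^ S.card ≠ 0 := by positivity
  field_simp
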